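/- For empirical models e₁, e₂ on the same measurement scenario and λ ∈ [0,1], the mixture λe₁ + (1−λ)e₂ satisfies NCF(λe₁ + (1−λ)e₂) ≥ λ·NCF(e₁) + (1−λ)·NCF(e₂); equivalently CF is convex: CF(λe₁ + (1−λ)e₂) ≤ λ·CF(e₁) + (1−λ)·CF(e₂). -/

import Mathlib

/-!
A noncontextual sub-model of `e` is a measure on global outcomes whose marginal on each context
is dominated by `e` there, and `NCF e` is the largest mass of such a sub-model. Marginalisation
is linear, so mixing sub-models `μ₁` of `e₁` and `μ₂` of `e₂` with weights `λ, 1 - λ` gives a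
sub-model of the mixed empirical model with mass `λ μ₁(univ) + (1 - λ) μ₂(univ)`; taking
suprema over `μ₁` and `μ₂` yields the inequality.
-/

open MeasureTheory
open scoped ENNReal

/-- The projection from the global outcome space onto the outcomes of a context `C`. -/
def proj {X : Type*} {O : X → Type*} (C : Set X) (g : ∀ x, O x) : ∀ x : C, O x :=
  fun x => g x

/-- The noncontextual fraction. -/
noncomputable def NCF {G : Type*} [MeasurableSpace G] {I : Type*} (M : Finset I)
    {Gc : I → Type*} [∀ i, MeasurableSpace (Gc i)] (π : ∀ i, G → Gc i)
    (e : ∀ i, Measure (Gc i)) : ℝ≥0∞ :=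
  sSup { r | ∃ μ : Measure G, (∀ i ∈ M, μ.map (π i) ≤ e i) ∧ r = μ Set.univ }

lemma MeasureTheory.Measure.map_smul_add_smul_le {α β : Type*} [MeasurableSpace α]
    [MeasurableSpace β] {f : α → β} (hf : Measurable f) {μ₁ μ₂ : Measure α}
    {ν₁ ν₂ : Measure β} (h₁ : μ₁.map f ≤ ν₁) (h₂ : μ₂.map f ≤ ν₂) (a b : ℝ≥0∞) :
    (a • μ₁ + b • μ₂).map f ≤ a • ν₁ + b • ν₂ := by
  rw [Measure.map_add _ _ hf, Measure.map_smul, Measure.map_smul]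
  gcongr

section NoncontextualFraction

variable {G : Type*} [MeasurableSpace G] {I : Type*} (M : Finset I)
  {Gc : I → Type*} [∀ i, MeasurableSpace (Gc i)] (π : ∀ i, G → Gc i)

def noncontextualSubmodels (e : ∀ i, Measure (Gc i)) : Set (Measure G) :=
  {μ | ∀ i ∈ M, μ.map (π i) ≤ e i}

lemma zero_mem_noncontextualSubmodels (e : ∀ i, Measure (Gc i)) :
    0 ∈ noncontextualSubmodels M π e := fun i _ => by
  simpa using Measure.zero_le (e i)

variable {M π} in
lemma smul_add_smul_mem_noncontextualSubmodels (hπ : ∀ i, Measurable (π i))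
    {e₁ e₂ : ∀ i, Measure (Gc i)} {μ₁ μ₂ : Measure G}
    (h₁ : μ₁ ∈ noncontextualSubmodels M π e₁) (h₂ : μ₂ ∈ noncontextualSubmodels M π e₂)
    (a b : ℝ≥0∞) :
    a • μ₁ + b • μ₂ ∈ noncontextualSubmodels M π (fun i => a • e₁ i + b • e₂ i) :=
  fun i hi => Measure.map_smul_add_smul_le (hπ i) (h₁ i hi) (h₂ i hi) a b

lemma NCF_eq_biSup (e : ∀ i, Measure (Gc i)) :
    NCF M π e = ⨆ μ ∈ noncontextualSubmodels M π e, μ Set.univ := by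
  rw [NCF, ← sSup_image]
  simp only [Set.image, eq_comm]
  rfl

lemma NCF_smul_add_smul_ge (hπ : ∀ i, Measurable (π i)) (e₁ e₂ : ∀ i, Measure (Gc i))
    (a b : ℝ≥0∞) :
    a * NCF M π e₁ + b * NCF M π e₂ ≤ NCF M π (fun i => a • e₁ i + b • e₂ i) := by
  simp only [NCF_eq_biSup, ENNReal.mul_iSup]
  refine ENNReal.biSup_add_biSup_le ⟨0, zero_mem_noncontextualSubmodels M π e₁⟩
    ⟨0, zero_mem_noncontextualSubmodels M π e₂⟩ fun μ₁ h₁ μ₂ h₂ => ?_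
  refine le_iSup₂_of_le _ (smul_add_smul_mem_noncontextualSubmodels hπ h₁ h₂ a b) ?_
  simp

end NoncontextualFraction

lemma measurable_proj {X : Type*} {O : X → Type*} [∀ x, MeasurableSpace (O x)] (C : Set X) :
    Measurable (proj C (O := O)) :=
  measurable_pi_lambda _ fun _ => measurable_pi_apply _

theorem ncf_mix_ge_general {X : Type*} {O : X → Type*}
    [∀ x, MeasurableSpace (O x)] (M : Finset (Set X))
    (e₁ e₂ : ∀ C : Set X, Measure (∀ x : C, O x))
    (lam : ℝ≥0∞) :
    NCF M (fun C : Set X => proj C (O := O))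
        (fun C => lam • e₁ C + (1 - lam) • e₂ C) ≥
      lam * NCF M (fun C : Set X => proj C (O := O)) e₁ +
        (1 - lam) * NCF M (fun C : Set X => proj C (O := O)) e₂ :=
  NCF_smul_add_smul_ge M _ measurable_proj e₁ e₂ lam (1 - lam)

/-- the noncontextual fraction is concave under probabilistic mixing of
empirical models on a common scenario:
`NCF (λ e₁ + (1-λ) e₂) ≥ λ NCF e₁ + (1-λ) NCF e₂`; equivalently `CF` is convex. -/
theorem ncf_mix_ge {X : Type*} [Fintype X] {O : X → Type*}
    [∀ x, MeasurableSpace (O x)] (M : Finset (Set X))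
    (e₁ e₂ : ∀ C : Set X, Measure (∀ x : C, O x))
    (he₁ : ∀ C ∈ M, IsProbabilityMeasure (e₁ C))
    (he₂ : ∀ C ∈ M, IsProbabilityMeasure (e₂ C))
    (lam : ℝ≥0∞) (hlam : lam ≤ 1) :
    NCF M (fun C : Set X => proj C (O := O))
        (fun C => lam • e₁ C + (1 - lam) • e₂ C) ≥
      lam * NCF M (fun C : Set X => proj C (O := O)) e₁ +
        (1 - lam) * NCF M (fun C : Set X => proj C (O := O)) e₂ :=
  ncf_mix_ge_general M e₁ e₂ lam
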